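/- arXiv:1710.07160 — 2 statements merged into one kernel-verified Lean document; each statement's English description precedes it below -/
import Mathlib

section
/- Let λ > 0 and ℓ₁, ℓ₂ ∈ ℝ, fix μ ∈ [0,1], and for s > 0 put T₁ = μ s and T₂ = (1−μ) s and let c: [0,∞) → ℝ be periodic with period T₁ + T₂, equal to ℓ₁ on [0,T₁) and ℓ₂ on [T₁, T₁+T₂). Then lim_{s→0⁺} ∫₀^∞ e^{−λt} c(t) dt = (μ ℓ₁ + (1−μ) ℓ₂)/λ. -/
open MeasureTheory Real Set Filter

lemma eint (lam a b : ℝ) (hlam : lam ≠ 0) (hab : a ≤ b) :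
    ∫ t in Set.Ico a b, Real.exp (-lam * t)
      = (Real.exp (-lam * a) - Real.exp (-lam * b)) / lam := by
  have hder : ∀ x : ℝ, HasDerivAt (fun t => -Real.exp (-lam * t) / lam)
      (Real.exp (-lam * x)) x := by
    intro x
    have h1 : HasDerivAt (fun t : ℝ => -lam * t) (-lam) x := by
      simpa using (hasDerivAt_id x).const_mul (-lam)
    have h2 := (Real.hasDerivAt_exp (-lam * x)).comp x h1
    have h3 := (h2.neg).div_const lam
    refine h3.congr_deriv ?_
    rw [div_eq_iff hlam]; ring
  rw [MeasureTheory.integral_Ico_eq_integral_Ioo, ← MeasureTheory.integral_Ioc_eq_integral_Ioo,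
    ← intervalIntegral.integral_of_le hab,
    intervalIntegral.integral_eq_sub_of_hasDerivAt (fun x _ => hder x)
      (Continuous.intervalIntegrable (by continuity) a b)]
  ring

lemma key (lam μ ℓ₁ ℓ₂ : ℝ) (hlam : 0 < lam) (hμ : μ ∈ Set.Icc (0:ℝ) 1)
    (s : ℝ) (hs : 0 < s) :
    ∫ t in Set.Ioi (0:ℝ), Real.exp (-lam * t) *
        (if Int.fract (t / s) < μ then ℓ₁ else ℓ₂)
      = (1 - Real.exp (-lam * s))⁻¹ *
        ((ℓ₁ * (1 - Real.exp (-lam * (μ * s)))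
          + ℓ₂ * (Real.exp (-lam * (μ * s)) - Real.exp (-lam * s))) / lam) := by
  obtain ⟨hμ0, hμ1⟩ := hμ
  set f : ℝ → ℝ := fun t => Real.exp (-lam * t) * (if Int.fract (t / s) < μ then ℓ₁ else ℓ₂)
    with hf
  have hmeas : Measurable f := by
    apply ((measurable_id.const_mul (-lam)).exp).mul
    exact Measurable.ite (measurableSet_lt (measurable_fract.comp
      (measurable_id.div_const s)) measurable_const) measurable_const measurable_const
  have hint : IntegrableOn f (Set.Ici 0) := by
    rw [integrableOn_Ici_iff_integrableOn_Ioi]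
    apply Integrable.mono' ((exp_neg_integrableOn_Ioi 0 hlam).const_mul (|ℓ₁| + |ℓ₂|))
      (hmeas.aestronglyMeasurable.restrict)
    filter_upwards with t
    rw [hf]
    simp only [Real.norm_eq_abs, abs_mul, Real.abs_exp]
    have hb : |if Int.fract (t / s) < μ then ℓ₁ else ℓ₂| ≤ |ℓ₁| + |ℓ₂| := by
      split_ifs
      · linarith [abs_nonneg ℓ₂]
      · linarith [abs_nonneg ℓ₁]
    calc Real.exp (-lam * t) * |if Int.fract (t / s) < μ then ℓ₁ else ℓ₂|
        ≤ Real.exp (-lam * t) * (|ℓ₁| + |ℓ₂|) :=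
          mul_le_mul_of_nonneg_left hb (Real.exp_nonneg _)
      _ = (|ℓ₁| + |ℓ₂|) * Real.exp (-lam * t) := mul_comm _ _
  set S : ℕ → Set ℝ := fun k => Set.Ico ((k : ℝ) * s) (((k : ℝ) + 1) * s) with hS
  have hUnion : (⋃ k, S k) = Set.Ici (0:ℝ) := by
    ext t
    simp only [hS, Set.mem_iUnion, Set.mem_Ico, Set.mem_Ici]
    constructor
    · rintro ⟨k, h1, h2⟩
      have : (0:ℝ) ≤ (k:ℝ) * s := by positivity
      linarith
    · intro ht
      have h0 : (0:ℝ) ≤ t / s := div_nonneg ht hs.le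
      refine ⟨⌊t / s⌋.toNat, ?_, ?_⟩
      · have hcast : (⌊t / s⌋.toNat : ℝ) = ((⌊t / s⌋ : ℤ) : ℝ) := by
          exact_mod_cast Int.toNat_of_nonneg (Int.floor_nonneg.2 h0)
        rw [hcast]
        calc ((⌊t / s⌋ : ℤ) : ℝ) * s ≤ (t / s) * s :=
              mul_le_mul_of_nonneg_right (Int.floor_le _) hs.le
          _ = t := div_mul_cancel₀ t hs.ne'
      · have hcast : ((⌊t / s⌋ : ℤ) : ℝ) ≤ (⌊t / s⌋.toNat : ℝ) := by
          exact_mod_cast Int.self_le_toNat _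
        have h2 : t / s < ((⌊t / s⌋ : ℤ) : ℝ) + 1 := Int.lt_floor_add_one _
        have : t / s * s < (((⌊t / s⌋ : ℤ) : ℝ) + 1) * s := by
          exact mul_lt_mul_of_pos_right h2 hs
        rw [div_mul_cancel₀ t hs.ne'] at this
        nlinarith
  have hdisj : Pairwise (Function.onFun Disjoint S) := by
    have haux : ∀ i j : ℕ, i < j → Disjoint (S i) (S j) := by
      intro i j hij
      rw [Set.disjoint_left]
      rintro t ⟨hi1, hi2⟩ ⟨hj1, hj2⟩
      have hij' : ((i:ℝ) + 1) ≤ (j:ℝ) := by exact_mod_cast hij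
      have : ((i:ℝ) + 1) * s ≤ (j:ℝ) * s := mul_le_mul_of_nonneg_right hij' hs.le
      linarith
    intro i j hij
    rcases lt_or_gt_of_ne hij with h | h
    · exact haux i j h
    · exact (haux j i h).symm
  have hterm : ∀ k : ℕ, ∫ t in S k, f t = Real.exp (-lam * ((k:ℝ) * s)) *
      ((ℓ₁ * (1 - Real.exp (-lam * (μ * s)))
        + ℓ₂ * (Real.exp (-lam * (μ * s)) - Real.exp (-lam * s))) / lam) := by
    intro k
    have hks : (k:ℝ) * s ≤ ((k:ℝ) + μ) * s := by nlinarith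
    have hms : ((k:ℝ) + μ) * s ≤ ((k:ℝ) + 1) * s := by nlinarith
    have hcongr : Set.EqOn f
        (fun t => Real.exp (-lam * t) * (if t < ((k:ℝ) + μ) * s then ℓ₁ else ℓ₂)) (S k) := by
      rintro t ⟨h1, h2⟩
      have hd1 : ((k:ℝ):ℝ) ≤ t / s := by
        rw [le_div_iff₀ hs]; linarith
      have hd2 : t / s < (k:ℝ) + 1 := by
        rw [div_lt_iff₀ hs]; linarith
      have hfloor : ⌊t / s⌋ = (k : ℤ) := by
        apply Int.floor_eq_iff.2
        constructor
        · exact_mod_cast hd1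
        · exact_mod_cast hd2
      have hfract : Int.fract (t / s) = t / s - (k:ℝ) := by
        rw [Int.fract, hfloor]; norm_num
      have hiff : (Int.fract (t / s) < μ) ↔ (t < ((k:ℝ) + μ) * s) := by
        rw [hfract]
        constructor
        · intro h
          have h3 : t / s < μ + (k:ℝ) := by linarith
          have := (div_lt_iff₀ hs).1 h3
          nlinarith
        · intro h
          have h3 : t / s < ((k:ℝ) + μ) := (div_lt_iff₀ hs).2 h
          linarith
      simp only [hf, hiff]
    rw [setIntegral_congr_fun measurableSet_Ico hcongr]
    have hsplit : S k = Set.Ico ((k:ℝ) * s) (((k:ℝ) + μ) * s)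
        ∪ Set.Ico (((k:ℝ) + μ) * s) (((k:ℝ) + 1) * s) :=
      (Set.Ico_union_Ico_eq_Ico hks hms).symm
    have hcont : Continuous fun t : ℝ => Real.exp (-lam * t) := by continuity
    have heq1 : Set.EqOn (fun t => Real.exp (-lam * t) * (if t < ((k:ℝ) + μ) * s then ℓ₁ else ℓ₂))
        (fun t => Real.exp (-lam * t) * ℓ₁) (Set.Ico ((k:ℝ) * s) (((k:ℝ) + μ) * s)) := by
      rintro t ⟨h1, h2⟩
      simp only [if_pos h2]
    have heq2 : Set.EqOn (fun t => Real.exp (-lam * t) * (if t < ((k:ℝ) + μ) * s then ℓ₁ else ℓ₂))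
        (fun t => Real.exp (-lam * t) * ℓ₂)
        (Set.Ico (((k:ℝ) + μ) * s) (((k:ℝ) + 1) * s)) := by
      rintro t ⟨h1, h2⟩
      simp only [if_neg (not_lt.2 h1)]
    have hi1 : IntegrableOn (fun t => Real.exp (-lam * t) *
        (if t < ((k:ℝ) + μ) * s then ℓ₁ else ℓ₂)) (Set.Ico ((k:ℝ) * s) (((k:ℝ) + μ) * s)) :=
      (((hcont.mul continuous_const).integrableOn_Icc).mono_set Set.Ico_subset_Icc_self).congr_fun heq1.symm measurableSet_Ico
    have hi2 : IntegrableOn (fun t => Real.exp (-lam * t) *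
        (if t < ((k:ℝ) + μ) * s then ℓ₁ else ℓ₂))
        (Set.Ico (((k:ℝ) + μ) * s) (((k:ℝ) + 1) * s)) :=
      (((hcont.mul continuous_const).integrableOn_Icc).mono_set Set.Ico_subset_Icc_self).congr_fun heq2.symm measurableSet_Ico
    rw [← Set.Ico_union_Ico_eq_Ico hks hms, setIntegral_union (Set.Ico_disjoint_Ico_same) measurableSet_Ico
      hi1 hi2, setIntegral_congr_fun measurableSet_Ico heq1, setIntegral_congr_fun measurableSet_Ico heq2,
      MeasureTheory.integral_mul_const, MeasureTheory.integral_mul_const, eint lam _ _ hlam.ne' hks, eint lam _ _ hlam.ne' hms]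
    rw [show -lam * (((k:ℝ) + μ) * s) = -lam * ((k:ℝ) * s) + -lam * (μ * s) by ring,
      show -lam * (((k:ℝ) + 1) * s) = -lam * ((k:ℝ) * s) + -lam * s by ring,
      Real.exp_add, Real.exp_add]
    field_simp
  have hIoi : ∫ t in Set.Ioi (0:ℝ), f t = ∫ t in Set.Ici (0:ℝ), f t :=
    (MeasureTheory.integral_Ici_eq_integral_Ioi).symm
  have hmeasS : ∀ k, MeasurableSet (S k) := fun k => measurableSet_Ico
  have hsum : ∫ t in Set.Ici (0:ℝ), f t = ∑' k : ℕ, ∫ t in S k, f t := by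
    rw [← hUnion] at hint ⊢
    exact integral_iUnion hmeasS hdisj hint
  have hr1 : Real.exp (-lam * s) < 1 := by
    rw [Real.exp_lt_one_iff]; nlinarith
  calc ∫ t in Set.Ioi (0:ℝ), f t = ∑' k : ℕ, ∫ t in S k, f t := by rw [hIoi, hsum]
    _ = ∑' k : ℕ, (Real.exp (-lam * s)) ^ k *
        ((ℓ₁ * (1 - Real.exp (-lam * (μ * s)))
          + ℓ₂ * (Real.exp (-lam * (μ * s)) - Real.exp (-lam * s))) / lam) := by
        congr 1
        funext k
        rw [hterm k]
        congr 1
        rw [← Real.exp_nat_mul]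
        congr 1
        ring
    _ = (1 - Real.exp (-lam * s))⁻¹ *
        ((ℓ₁ * (1 - Real.exp (-lam * (μ * s)))
          + ℓ₂ * (Real.exp (-lam * (μ * s)) - Real.exp (-lam * s))) / lam) := by
        rw [tsum_mul_right, tsum_geometric_of_lt_one (Real.exp_nonneg _) hr1]

lemma slope_lim (a : ℝ) : Filter.Tendsto (fun s : ℝ => (1 - Real.exp (-a * s)) / s)
    (nhdsWithin 0 (Set.Ioi 0)) (nhds a) := by
  have hd : HasDerivAt (fun s : ℝ => 1 - Real.exp (-a * s)) a 0 := by
    have h1 : HasDerivAt (fun s : ℝ => -a * s) (-a) 0 := by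
      simpa using (hasDerivAt_id (0:ℝ)).const_mul (-a)
    have h2 := (Real.hasDerivAt_exp (-a * 0)).comp 0 h1
    have h3 := (hasDerivAt_const (0:ℝ) (1:ℝ)).sub h2
    refine h3.congr_deriv ?_
    simp
  have h4 := hasDerivAt_iff_tendsto_slope.1 hd
  have h5 : Filter.Tendsto (slope (fun s : ℝ => 1 - Real.exp (-a * s)) 0)
      (nhdsWithin 0 (Set.Ioi 0)) (nhds a) :=
    h4.mono_left (nhdsWithin_mono _ (fun x hx => ne_of_gt hx))
  apply h5.congr
  intro s
  rw [slope_def_field]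
  simp

theorem stmt_9 (lam μ ℓ₁ ℓ₂ : ℝ) (hlam : 0 < lam) (hμ : μ ∈ Set.Icc (0:ℝ) 1)
    (c : ℝ → ℝ → ℝ)
    (hc : ∀ s > 0, ∀ t, c s t = if Int.fract (t / s) < μ then ℓ₁ else ℓ₂) :
    Filter.Tendsto (fun s => ∫ t in Set.Ioi (0:ℝ), Real.exp (-lam * t) * c s t)
      (nhdsWithin 0 (Set.Ioi 0)) (nhds ((μ * ℓ₁ + (1 - μ) * ℓ₂) / lam)) := by
  have hP : Filter.Tendsto
      (fun s => (1 - Real.exp (-(lam * μ) * s)) / (1 - Real.exp (-lam * s)))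
      (nhdsWithin 0 (Set.Ioi 0)) (nhds μ) := by
    have h := (slope_lim (lam * μ)).div (slope_lim lam) hlam.ne'
    have h2 : (lam * μ) / lam = μ := by field_simp
    rw [h2] at h
    apply h.congr'
    filter_upwards [self_mem_nhdsWithin] with s hs
    have hs' : (0:ℝ) < s := hs
    simp only [Pi.div_apply]
    exact div_div_div_cancel_right₀ (ne_of_gt hs') _ _
  have hfinal : Filter.Tendsto
      (fun s => ((1 - Real.exp (-(lam * μ) * s)) / (1 - Real.exp (-lam * s)) * ℓ₁
        + (1 - (1 - Real.exp (-(lam * μ) * s)) / (1 - Real.exp (-lam * s))) * ℓ₂) / lam)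
      (nhdsWithin 0 (Set.Ioi 0)) (nhds ((μ * ℓ₁ + (1 - μ) * ℓ₂) / lam)) :=
    ((hP.mul_const ℓ₁).add ((tendsto_const_nhds.sub hP).mul_const ℓ₂)).div_const lam
  apply hfinal.congr'
  filter_upwards [self_mem_nhdsWithin] with s hs
  have hkey := key lam μ ℓ₁ ℓ₂ hlam hμ s hs
  have hcs : (∫ t in Set.Ioi (0:ℝ), Real.exp (-lam * t) * c s t)
      = ∫ t in Set.Ioi (0:ℝ), Real.exp (-lam * t) *
          (if Int.fract (t / s) < μ then ℓ₁ else ℓ₂) := by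
    congr 1
    funext t
    rw [hc s hs t]
  rw [hcs, hkey]
  have hs' : (0:ℝ) < s := hs
  have he : Real.exp (-lam * s) < 1 := by
    rw [Real.exp_lt_one_iff]; nlinarith
  have hD : 1 - Real.exp (-lam * s) ≠ 0 := by linarith
  have hlam' : lam ≠ 0 := hlam.ne'
  have harg : -(lam * μ) * s = -lam * (μ * s) := by ring
  rw [harg]
  rw [show (1 - Real.exp (-lam * (μ * s))) / (1 - Real.exp (-lam * s)) * ℓ₁
      + (1 - (1 - Real.exp (-lam * (μ * s))) / (1 - Real.exp (-lam * s))) * ℓ₂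
      = (ℓ₁ * (1 - Real.exp (-lam * (μ * s)))
        + ℓ₂ * (Real.exp (-lam * (μ * s)) - Real.exp (-lam * s)))
        / (1 - Real.exp (-lam * s)) from by
      rw [one_sub_div hD, div_mul_eq_mul_div, div_mul_eq_mul_div, ← add_div]
      congr 1
      ring]
  rw [inv_mul_eq_div, div_div, div_div]
  ring
end

section
/- Let λ > 0, let c: [0,∞) → ℝ be s-periodic and bounded with |c| ≤ M, taking constant values ℓ₁, ℓ₂, ℓ₃ on consecutive subintervals of lengths μ₁s, μ₂s, μ₃s where μ₁+μ₂+μ₃ = 1, μᵢ ≥ 0. Then |∫₀^∞ e^{−λt} c(t) dt − (μ₁ℓ₁ + μ₂ℓ₂ + μ₃ℓ₃)/λ| ≤ C·s for a constant C depending only on M and λ. -/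
/-!
Subtract the period mean `m = μ₁ℓ₁ + μ₂ℓ₂ + μ₃ℓ₃` (note `m / λ = ∫₀^∞ e^{-λt} m dt`), leaving a
periodic `g = c - m` with `|g| ≤ 2M` and zero mean over a period. Splitting `(0, ∞)` into the
first period and its translate gives `(1 - e^{-λs}) ∫₀^∞ e^{-λt} g = ∫₀^s e^{-λt} g`. Because `g`
has zero mean, the weight `e^{-λt}` on the right may be replaced by `e^{-λt} - 1`, which on
`[0, s]` is bounded by exactly `1 - e^{-λs}`. Hence `|∫₀^∞ e^{-λt} g| ≤ 2M s`.
-/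

open MeasureTheory Set Real

theorem setIntegral_Ioi_comp_add_right {E : Type*} [NormedAddCommGroup E] [NormedSpace ℝ E]
    (f : ℝ → E) (a b : ℝ) : ∫ x in Ioi b, f (x + a) = ∫ x in Ioi (b + a), f x := by
  simpa [preimage_add_const_Ioi] using
    (measurePreserving_add_right volume a).setIntegral_preimage_emb
      (measurableEmbedding_addRight a) f (Ioi (b + a))

theorem integral_Ioi_exp_neg_mul (lam : ℝ) (hlam : 0 < lam) :
    ∫ t in Ioi (0 : ℝ), exp (-lam * t) = 1 / lam := by
  rw [integral_exp_mul_Ioi (neg_lt_zero.mpr hlam)]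
  simp [neg_div_neg_eq]

theorem integrableOn_Ioi_exp_neg_mul_mul_of_abs_le {lam K : ℝ} {g : ℝ → ℝ} (hlam : 0 < lam)
    (hg : Measurable g) (hgK : ∀ t, |g t| ≤ K) :
    IntegrableOn (fun t => exp (-lam * t) * g t) (Ioi 0) :=
  (exp_neg_integrableOn_Ioi 0 hlam).mul_bdd hg.aestronglyMeasurable.restrict
    (Filter.Eventually.of_forall hgK)

theorem intervalIntegrable_of_abs_le {g : ℝ → ℝ} {K : ℝ} (hg : Measurable g)
    (hgK : ∀ t, |g t| ≤ K) (a b : ℝ) : IntervalIntegrable g volume a b :=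
  intervalIntegrable_const.mono_fun' hg.aestronglyMeasurable (Filter.Eventually.of_forall hgK)

theorem integral_Ioi_exp_neg_mul_of_periodic {lam s : ℝ} {g : ℝ → ℝ} (hs : 0 ≤ s)
    (hg : Function.Periodic g s) (hint : IntegrableOn (fun t => exp (-lam * t) * g t) (Ioi 0)) :
    (1 - exp (-lam * s)) * ∫ t in Ioi 0, exp (-lam * t) * g t
      = ∫ t in 0..s, exp (-lam * t) * g t := by
  have hshift : ∫ t in Ioi s, exp (-lam * t) * g t
      = exp (-lam * s) * ∫ t in Ioi 0, exp (-lam * t) * g t := by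
    rw [← zero_add s, ← setIntegral_Ioi_comp_add_right, zero_add, ← integral_const_mul]
    congr 1 with t
    rw [hg t, mul_add, exp_add]
    ring
  have hsplit := setIntegral_union (Ioc_disjoint_Ioi_same (a := 0) (b := s)) measurableSet_Ioi
    (hint.mono_set Ioc_subset_Ioi_self) (hint.mono_set (Ioi_subset_Ioi hs))
  rw [Ioc_union_Ioi_eq_Ioi hs, hshift, ← intervalIntegral.integral_of_le hs] at hsplit
  linear_combination hsplit

theorem abs_integral_Ioi_exp_neg_mul_le_of_periodic {lam s K : ℝ} {g : ℝ → ℝ} (hlam : 0 < lam)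
    (hs : 0 < s) (hg : Function.Periodic g s) (hgm : Measurable g) (hgK : ∀ t, |g t| ≤ K)
    (hmean : ∫ t in 0..s, g t = 0) :
    |∫ t in Ioi 0, exp (-lam * t) * g t| ≤ K * s := by
  set q := exp (-lam * s)
  have hq : 0 < 1 - q := sub_pos.mpr (Real.exp_lt_one_iff.mpr (by nlinarith))
  have hdecay : ∀ t ∈ uIoc 0 s, |exp (-lam * t) - 1| ≤ 1 - q := by
    intro t ht
    rw [uIoc_of_le hs.le] at ht
    rw [abs_of_nonpos (sub_nonpos.mpr (Real.exp_le_one_iff.mpr (by nlinarith [ht.1])))]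
    linarith [exp_le_exp.mpr (show -lam * s ≤ -lam * t by nlinarith [ht.2])]
  have hperiod : ∫ t in 0..s, exp (-lam * t) * g t = ∫ t in 0..s, (exp (-lam * t) - 1) * g t := by
    have hint : IntervalIntegrable (fun t => exp (-lam * t) * g t) volume 0 s :=
      (intervalIntegrable_of_abs_le hgm hgK 0 s).continuousOn_mul (by fun_prop)
    simp only [sub_mul, one_mul]
    rw [intervalIntegral.integral_sub hint (intervalIntegrable_of_abs_le hgm hgK 0 s), hmean,
      sub_zero]
  have hbound : |∫ t in 0..s, (exp (-lam * t) - 1) * g t| ≤ (1 - q) * K * s := by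
    have := intervalIntegral.norm_integral_le_of_norm_le_const (C := (1 - q) * K)
      (f := fun t => (exp (-lam * t) - 1) * g t) (a := 0) (b := s) fun t ht => by
        rw [norm_mul, Real.norm_eq_abs, Real.norm_eq_abs]
        exact mul_le_mul (hdecay t ht) (hgK t) (abs_nonneg _) hq.le
    simpa [abs_of_pos hs] using this
  rw [← mul_le_mul_iff_of_pos_left hq, ← abs_of_pos hq, ← abs_mul, abs_of_pos hq,
    integral_Ioi_exp_neg_mul_of_periodic hs.le hg
      (integrableOn_Ioi_exp_neg_mul_mul_of_abs_le hlam hgm hgK), hperiod]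
  linarith

theorem integral_eq_of_forall_Ico {f : ℝ → ℝ} {a b ℓ : ℝ} (hab : a ≤ b)
    (hf : ∀ t ∈ Ico a b, f t = ℓ) : ∫ t in a..b, f t = (b - a) * ℓ := by
  rw [intervalIntegral.integral_of_le hab, integral_Ioc_eq_integral_Ioo,
    setIntegral_congr_fun measurableSet_Ioo (fun t ht => hf t ⟨ht.1.le, ht.2⟩),
    setIntegral_const, Real.volume_real_Ioo_of_le hab, smul_eq_mul]

theorem integral_eq_of_piecewise_const₃ {c : ℝ → ℝ} {s ℓ₁ ℓ₂ ℓ₃ μ₁ μ₂ μ₃ : ℝ} (hs : 0 ≤ s)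
    (hc : ∀ a b, IntervalIntegrable c volume a b) (h₁ : 0 ≤ μ₁) (h₂ : 0 ≤ μ₂) (h₃ : 0 ≤ μ₃)
    (hμ : μ₁ + μ₂ + μ₃ = 1) (hc₁ : ∀ t ∈ Ico 0 (μ₁ * s), c t = ℓ₁)
    (hc₂ : ∀ t ∈ Ico (μ₁ * s) ((μ₁ + μ₂) * s), c t = ℓ₂)
    (hc₃ : ∀ t ∈ Ico ((μ₁ + μ₂) * s) s, c t = ℓ₃) :
    ∫ t in 0..s, c t = s * (μ₁ * ℓ₁ + μ₂ * ℓ₂ + μ₃ * ℓ₃) := by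
  rw [← intervalIntegral.integral_add_adjacent_intervals (hc 0 ((μ₁ + μ₂) * s)) (hc _ s),
    ← intervalIntegral.integral_add_adjacent_intervals (hc 0 (μ₁ * s)) (hc _ ((μ₁ + μ₂) * s)),
    integral_eq_of_forall_Ico (by positivity) hc₁,
    integral_eq_of_forall_Ico (by nlinarith) hc₂,
    integral_eq_of_forall_Ico (by nlinarith) hc₃]
  linear_combination (-(s * ℓ₃)) * hμ

theorem stmt_10 (lam M : ℝ) (hlam : 0 < lam) (hM : 0 ≤ M) :
    ∃ C : ℝ, 0 ≤ C ∧ ∀ (s : ℝ), 0 < s → ∀ (c : ℝ → ℝ) (ℓ₁ ℓ₂ ℓ₃ μ₁ μ₂ μ₃ : ℝ),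
      Measurable c →
      (∀ t, |c t| ≤ M) →
      (∀ t, c (t + s) = c t) →
      0 ≤ μ₁ → 0 ≤ μ₂ → 0 ≤ μ₃ → μ₁ + μ₂ + μ₃ = 1 →
      (∀ t ∈ Set.Ico (0:ℝ) (μ₁ * s), c t = ℓ₁) →
      (∀ t ∈ Set.Ico (μ₁ * s) ((μ₁ + μ₂) * s), c t = ℓ₂) →
      (∀ t ∈ Set.Ico ((μ₁ + μ₂) * s) s, c t = ℓ₃) →
      |(∫ t in Set.Ioi (0:ℝ), Real.exp (-lam * t) * c t)
        - (μ₁ * ℓ₁ + μ₂ * ℓ₂ + μ₃ * ℓ₃) / lam| ≤ C * s := by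
  refine ⟨2 * M, by positivity, ?_⟩
  intro s hs c ℓ₁ ℓ₂ ℓ₃ μ₁ μ₂ μ₃ hc hcM hper h₁ h₂ h₃ hμ hc₁ hc₂ hc₃
  set m := μ₁ * ℓ₁ + μ₂ * ℓ₂ + μ₃ * ℓ₃
  have hci := intervalIntegrable_of_abs_le hc hcM
  have hmean : ∫ t in 0..s, c t = s * m :=
    integral_eq_of_piecewise_const₃ hs.le hci h₁ h₂ h₃ hμ hc₁ hc₂ hc₃
  have hm : |m| ≤ M := by
    have := intervalIntegral.norm_integral_le_of_norm_le_const (a := 0) (b := s)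
      fun t _ => (Real.norm_eq_abs (c t)).trans_le (hcM t)
    rw [hmean, norm_mul, Real.norm_eq_abs, Real.norm_eq_abs, sub_zero, abs_of_pos hs] at this
    nlinarith
  have hosc : |∫ t in Ioi 0, exp (-lam * t) * (c t - m)| ≤ 2 * M * s := by
    refine abs_integral_Ioi_exp_neg_mul_le_of_periodic (K := 2 * M) hlam hs
      (fun t => by simp [hper t]) (hc.sub_const m) (fun t => (abs_sub _ _).trans (by linarith [hcM t])) ?_
    rw [intervalIntegral.integral_sub (hci 0 s) intervalIntegrable_const, hmean,
      intervalIntegral.integral_const, smul_eq_mul, sub_zero, sub_self]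
  have hsplit : ∫ t in Ioi 0, exp (-lam * t) * (c t - m)
      = (∫ t in Ioi 0, exp (-lam * t) * c t) - m / lam := by
    simp only [mul_sub]
    rw [integral_sub (integrableOn_Ioi_exp_neg_mul_mul_of_abs_le hlam hc hcM)
      ((exp_neg_integrableOn_Ioi 0 hlam).mul_const m), integral_mul_const,
      integral_Ioi_exp_neg_mul lam hlam]
    ring
  rwa [hsplit] at hosc
end
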